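/- Let m ≥ 2, k ≥ 0, c ≥ 0, χ ∈ ℝ, let Y_k be a nonzero solid inner spherical monogenic of degree k on ℝ^m, let G ∈ C²([0,1]), and set ψ(x) = x G(|x|²) Y_k(x) (x a Clifford vector). If L_c ψ(x) = χ ψ(x) for all x in the open unit ball, then for all t ∈ (0,1): 4t(1−t) G''(t) + 2(m + 2k + 2 − t(4 + m + 2k)) G'(t) − (4π²c² t + 2(m + 2k)) G(t) + χ G(t) = 0. -/

import Mathlib

open MeasureTheory Real Finset
open scoped RealInnerProductSpace ENNReal

noncomputable section

/-- `m`-dimensional Euclidean space. -/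
abbrev Em (m : ℕ) := EuclideanSpace ℝ (Fin m)

variable {m : ℕ} {A : Type*} [NormedRing A] [NormedAlgebra ℂ A]

/-- `A` is a model of the complex Clifford algebra `ℂ_m`: it is generated by
`e 1, …, e m` with `e j ^ 2 = -1` and `e i * e j = - e j * e i` for `i ≠ j`, and the
ordered products `e_{j₁} ⋯ e_{j_h}` over subsets `{j₁ < ⋯ < j_h}` form a basis `b`. -/
structure IsCliffordAlgebra (m : ℕ) (A : Type*) [NormedRing A] [NormedAlgebra ℂ A]
    (e : Fin m → A) (b : Module.Basis (Finset (Fin m)) ℂ A) : Prop where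
  gen_sq : ∀ j, e j * e j = -1
  gen_anticomm : ∀ i j, i ≠ j → e i * e j = -(e j * e i)
  basis_prod : ∀ s : Finset (Fin m), b s = ((s.sort (· ≤ ·)).map e).prod

/-- The Clifford vector `x = Σ_j x_j e_j` associated to a point `x ∈ ℝ^m`. -/
def cvec (e : Fin m → A) (x : Em m) : A := ∑ j, ((x j : ℝ) : ℂ) • e j

/-- The scalar part `[a]₀` of a Clifford number. -/
def scalarPart (b : Module.Basis (Finset (Fin m)) ℂ A) (a : A) : ℂ := b.repr a ∅

/-- Clifford conjugation: the conjugate-linear anti-automorphism with `conj (e j) = - e j`;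
on the basis element `e_A` with `|A| = h` it acts as `(-1)^(h(h+1)/2)` together with complex
conjugation of the coordinates. -/
def cliffConj (b : Module.Basis (Finset (Fin m)) ℂ A) (a : A) : A :=
  (b.repr a).sum fun s c =>
    ((-1 : ℂ) ^ (s.card * (s.card + 1) / 2) * (starRingEnd ℂ) c) • b s

/-- The Clifford norm square `|a|² = [conj a * a]₀`. -/
def cliffNormSq (b : Module.Basis (Finset (Fin m)) ℂ A) (a : A) : ℂ :=
  scalarPart b (cliffConj b a * a)

/-- The Dirac operator `∂ₓ f = Σ_j e_j ∂f/∂x_j`, acting on the left. -/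
def dirac (e : Fin m → A) (f : Em m → A) (x : Em m) : A :=
  ∑ j, e j * fderiv ℝ f x (EuclideanSpace.single j 1)

/-- The Dirac operator acting on the right, `f ∂ₓ = Σ_j (∂f/∂x_j) e_j`. -/
def diracR (e : Fin m → A) (f : Em m → A) (x : Em m) : A :=
  ∑ j, fderiv ℝ f x (EuclideanSpace.single j 1) * e j

/-- The Clifford differential operator
`L_c f(x) = ∂ₓ((1 - |x|²) ∂ₓ f(x)) + 4π²c²|x|² f(x)`. -/
def Lc (e : Fin m → A) (c : ℝ) (f : Em m → A) (x : Em m) : A :=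
  dirac e (fun y => (1 - ‖y‖ ^ 2) • dirac e f y) x + (4 * π ^ 2 * c ^ 2 * ‖x‖ ^ 2) • f x


section Aux
variable {e : Fin m → A} {b : Module.Basis (Finset (Fin m)) ℂ A}

-- cvec as CLM
def cvecCLM (e : Fin m → A) : Em m →L[ℝ] A :=
  ∑ j, ((Complex.ofRealCLM.comp (EuclideanSpace.proj j : Em m →L[ℝ] ℝ)).smulRight (e j))

lemma cvecCLM_apply (e : Fin m → A) (x : Em m) : cvecCLM e x = cvec e x := by
  simp [cvecCLM, cvec, ContinuousLinearMap.sum_apply]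

lemma hasFDerivAt_cvec (e : Fin m → A) (x : Em m) :
    HasFDerivAt (cvec e) (cvecCLM e) x := by
  have : cvec e = fun x => cvecCLM e x := by ext x; rw [cvecCLM_apply]
  rw [this]; exact (cvecCLM e).hasFDerivAt

lemma cvecCLM_single (e : Fin m → A) (j : Fin m) :
    cvecCLM e (EuclideanSpace.single j 1) = e j := by
  rw [cvecCLM_apply]
  simp [cvec, EuclideanSpace.single_apply]

lemma norm_sq_eq (x : Em m) : ‖x‖ ^ 2 = ∑ i, x i ^ 2 := by
  rw [EuclideanSpace.norm_eq, Real.sq_sqrt (by positivity)]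
  simp [sq_abs]

variable {e : Fin m → A} {b : Module.Basis (Finset (Fin m)) ℂ A}

lemma cvec_sq (hA : IsCliffordAlgebra m A e b) (x : Em m) :
    cvec e x * cvec e x = ((-(‖x‖ ^ 2) : ℝ) : ℂ) • 1 := by
  have expand : cvec e x * cvec e x
      = ∑ i, ∑ j, (((x i : ℝ) : ℂ) * ((x j : ℝ) : ℂ)) • (e i * e j) := by
    rw [cvec, Finset.sum_mul_sum]
    simp_rw [smul_mul_assoc, mul_smul_comm, smul_smul]
  have swap : cvec e x * cvec e x
      = ∑ i, ∑ j, (((x j : ℝ) : ℂ) * ((x i : ℝ) : ℂ)) • (e j * e i) := by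
    rw [expand]; rw [Finset.sum_comm]
  have h2 : (2 : ℂ) • (cvec e x * cvec e x)
      = ∑ i : Fin m, ((-2 * (x i ^ 2) : ℝ) : ℂ) • (1 : A) := by
    rw [two_smul]
    nth_rewrite 1 [expand]
    nth_rewrite 1 [swap]
    rw [← Finset.sum_add_distrib]
    refine Finset.sum_congr rfl fun i _ => ?_
    rw [← Finset.sum_add_distrib]
    rw [Finset.sum_eq_single i]
    · rw [← smul_add, hA.gen_sq i]
      push_cast
      module
    · intro j _ hj
      rw [hA.gen_anticomm j i hj, mul_comm (((x j : ℝ) : ℂ))]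
      simp
    · simp
  have : cvec e x * cvec e x = (2 : ℂ)⁻¹ • ((2:ℂ) • (cvec e x * cvec e x)) := by
    rw [smul_smul]; norm_num
  rw [this, h2, norm_sq_eq, Finset.smul_sum]
  simp only [smul_smul]
  rw [← Finset.sum_smul]
  congr 1
  push_cast
  rw [← Finset.sum_neg_distrib]
  exact Finset.sum_congr rfl fun i _ => by ring

lemma e_mul_cvec (hA : IsCliffordAlgebra m A e b) (x : Em m) (j : Fin m) :
    e j * cvec e x + cvec e x * e j = ((-2 * x j : ℝ) : ℂ) • 1 := by
  rw [cvec, Finset.mul_sum, Finset.sum_mul, ← Finset.sum_add_distrib]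
  rw [Finset.sum_eq_single j]
  · rw [mul_smul_comm, smul_mul_assoc, ← smul_add, hA.gen_sq j]
    push_cast
    module
  · intro i _ hi
    rw [mul_smul_comm, smul_mul_assoc, ← smul_add, hA.gen_anticomm j i (Ne.symm hi)]
    simp
  · simp

lemma cvec_real (e : Fin m → A) (x : Em m) : cvec e x = ∑ j, x j • e j := by
  simp [cvec, Complex.coe_smul]

lemma euclid_decomp (x : Em m) : x = ∑ j, x j • EuclideanSpace.single j (1:ℝ) := by
  ext i
  rw [WithLp.ofLp_sum, Finset.sum_apply]
  · simp [EuclideanSpace.single_apply]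
  
lemma euler {Y : Em m → A} (k : ℕ)
    (hYhom : ∀ t : ℝ, 0 < t → ∀ x, Y (t • x) = (t ^ k) • Y x)
    {x : Em m} (hY : DifferentiableAt ℝ Y x) :
    fderiv ℝ Y x x = (k : ℝ) • Y x := by
  have hφ : HasDerivAt (fun s : ℝ => Y (s • x)) (fderiv ℝ Y x x) 1 := by
    have h1 : HasDerivAt (fun s : ℝ => s • x) x 1 := by
      simpa using (hasDerivAt_id (1:ℝ)).smul_const x
    have hY' : HasFDerivAt Y (fderiv ℝ Y x) ((1:ℝ) • x) := by simpa using hY.hasFDerivAt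
    exact (hY'.comp_hasDerivAt (1:ℝ) h1)
  have heq : (fun s : ℝ => Y (s • x)) =ᶠ[nhds 1] fun s => (s ^ k) • Y x := by
    filter_upwards [isOpen_Ioi.mem_nhds (by norm_num : (0:ℝ) < 1)] with s hs
    exact hYhom s hs x
  have hφ' : HasDerivAt (fun s : ℝ => (s ^ k) • Y x) ((k : ℝ) • Y x) 1 := by
    simpa using (hasDerivAt_pow k (1:ℝ)).smul_const (Y x)
  exact hφ.unique (hφ'.congr_of_eventuallyEq heq)

lemma euler_sum {Y : Em m → A} (k : ℕ)
    (hYhom : ∀ t : ℝ, 0 < t → ∀ x, Y (t • x) = (t ^ k) • Y x)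
    {x : Em m} (hY : DifferentiableAt ℝ Y x) :
    ∑ j, x j • fderiv ℝ Y x (EuclideanSpace.single j 1) = (k : ℝ) • Y x := by
  rw [← euler k hYhom hY]
  have : (fderiv ℝ Y x) x = (fderiv ℝ Y x) (∑ j, x j • EuclideanSpace.single j (1:ℝ)) := by
    rw [← euclid_decomp x]
  rw [this, map_sum]
  simp

lemma dirac_congr {e : Fin m → A} {f g : Em m → A} {x : Em m}
    (h : f =ᶠ[nhds x] g) : dirac e f x = dirac e g x := by
  unfold dirac
  rw [h.fderiv_eq]

lemma dirac_radial_smul {e : Fin m → A} {u : ℝ → ℝ} {u' : ℝ} {Z : Em m → A} {x : Em m}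
    (hu : HasDerivAt u u' (‖x‖ ^ 2)) (hZ : DifferentiableAt ℝ Z x) :
    dirac e (fun y => u (‖y‖ ^ 2) • Z y) x
      = (2 * u') • (cvec e x * Z x) + u (‖x‖ ^ 2) • dirac e Z x := by
  have hn : HasFDerivAt (fun y : Em m => ‖y‖ ^ 2) (2 • innerSL ℝ x) x :=
    (hasStrictFDerivAt_norm_sq x).hasFDerivAt
  have hun : HasFDerivAt (fun y : Em m => u (‖y‖ ^ 2))
      ((2 * u') • (innerSL ℝ x : Em m →L[ℝ] ℝ)) x := by
    have h0 := hu.comp_hasFDerivAt x hn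
    refine h0.congr_fderiv ?_
    ext v
    simp [two_smul]
    ring
  have hF : HasFDerivAt (fun y => u (‖y‖ ^ 2) • Z y)
      (u (‖x‖ ^ 2) • fderiv ℝ Z x + ((2 * u') • (innerSL ℝ x : Em m →L[ℝ] ℝ)).smulRight (Z x)) x :=
    hun.smul hZ.hasFDerivAt
  unfold dirac
  rw [hF.fderiv]
  simp only [ContinuousLinearMap.add_apply, ContinuousLinearMap.coe_smul',
    Pi.smul_apply, ContinuousLinearMap.smulRight_apply, innerSL_apply_apply,
    EuclideanSpace.inner_single_right, RCLike.inner_apply, starRingEnd_apply, star_trivial,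
    smul_eq_mul, one_mul, mul_add, Finset.sum_add_distrib]
  rw [add_comm]
  congr 1
  · rw [cvec_real, Finset.sum_mul, Finset.smul_sum]
    refine Finset.sum_congr rfl fun j _ => ?_
    rw [smul_mul_assoc, smul_smul, mul_smul_comm]
  · rw [Finset.smul_sum]
    refine Finset.sum_congr rfl fun j _ => ?_
    rw [mul_smul_comm]



lemma dirac_odd (hA : IsCliffordAlgebra m A e b) {u : ℝ → ℝ} {u' : ℝ} {Y : Em m → A} (k : ℕ)
    (hYhom : ∀ t : ℝ, 0 < t → ∀ x, Y (t • x) = (t ^ k) • Y x)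
    (x : Em m) (hu : HasDerivAt u u' (‖x‖ ^ 2)) (hY : DifferentiableAt ℝ Y x)
    (hYm : dirac e Y x = 0) :
    dirac e (fun y => cvec e y * (u (‖y‖ ^ 2) • Y y)) x
      = (-((m : ℝ) + 2 * k) * u (‖x‖ ^ 2) - 2 * ‖x‖ ^ 2 * u') • Y x := by
  have hn : HasFDerivAt (fun y : Em m => ‖y‖ ^ 2) (2 • innerSL ℝ x) x :=
    (hasStrictFDerivAt_norm_sq x).hasFDerivAt
  have hun : HasFDerivAt (fun y : Em m => u (‖y‖ ^ 2))
      ((2 * u') • (innerSL ℝ x : Em m →L[ℝ] ℝ)) x := by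
    have h0 := hu.comp_hasFDerivAt x hn
    refine h0.congr_fderiv ?_
    ext v
    simp [two_smul]
    ring
  have hF : HasFDerivAt (fun y => u (‖y‖ ^ 2) • Y y)
      (u (‖x‖ ^ 2) • fderiv ℝ Y x
        + ((2 * u') • (innerSL ℝ x : Em m →L[ℝ] ℝ)).smulRight (Y x)) x :=
    hun.smul hY.hasFDerivAt
  have hψ := (hasFDerivAt_cvec e x).mul' hF
  have expand : dirac e (fun y => cvec e y * (u (‖y‖ ^ 2) • Y y)) x
      = ∑ j, (u (‖x‖ ^ 2) • (e j * (cvec e x * fderiv ℝ Y x (EuclideanSpace.single j 1)))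
          + ((2 * u' * x j) • (e j * (cvec e x * Y x))
          + -(u (‖x‖ ^ 2) • Y x))) := by
    unfold dirac
    rw [(show HasFDerivAt (fun y => cvec e y * (u (‖y‖ ^ 2) • Y y)) _ x from hψ).fderiv]
    refine Finset.sum_congr rfl fun j _ => ?_
    simp only [ContinuousLinearMap.add_apply, ContinuousLinearMap.coe_smul', Pi.smul_apply,
      ContinuousLinearMap.smulRight_apply, innerSL_apply_apply, EuclideanSpace.inner_single_right,
      RCLike.inner_apply, starRingEnd_apply, star_trivial, cvecCLM_single, smul_eq_mul,
      one_mul]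
    have h3 : e j * (e j * Y x) = -(Y x) := by
      rw [← mul_assoc, hA.gen_sq, neg_one_mul]
    simp only [mul_add, mul_smul_comm, smul_smul, h3, smul_neg, neg_smul, one_smul,
      op_smul_eq_mul, hA.gen_sq, neg_one_mul, one_mul]
    abel
  rw [expand, Finset.sum_add_distrib, Finset.sum_add_distrib]
  have hS1 : ∑ j, u (‖x‖ ^ 2) • (e j * (cvec e x * fderiv ℝ Y x (EuclideanSpace.single j 1)))
      = (u (‖x‖ ^ 2) * (-2 * k)) • Y x := by
    rw [← Finset.smul_sum]
    have per : ∀ j, e j * (cvec e x * fderiv ℝ Y x (EuclideanSpace.single j 1))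
        = (-2 * x j) • fderiv ℝ Y x (EuclideanSpace.single j 1)
          - cvec e x * (e j * fderiv ℝ Y x (EuclideanSpace.single j 1)) := by
      intro j
      rw [← mul_assoc, eq_sub_of_add_eq (e_mul_cvec hA x j), sub_mul, smul_mul_assoc, one_mul,
        mul_assoc, Complex.coe_smul]
    rw [Finset.sum_congr rfl fun j _ => per j, Finset.sum_sub_distrib, ← Finset.mul_sum]
    rw [show ∑ j, e j * fderiv ℝ Y x (EuclideanSpace.single j 1) = dirac e Y x from rfl, hYm,
      mul_zero, sub_zero]
    have h2 : ∀ j : Fin m, ((-2 : ℝ) * x j) • fderiv ℝ Y x (EuclideanSpace.single j 1)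
        = (-2 : ℝ) • (x j • fderiv ℝ Y x (EuclideanSpace.single j 1)) := fun j => by
      rw [smul_smul]
    rw [Finset.sum_congr rfl fun j _ => h2 j, ← Finset.smul_sum, euler_sum k hYhom hY,
      smul_smul, smul_smul]
    ring_nf
  have hS2 : ∑ j, (2 * u' * x j) • (e j * (cvec e x * Y x))
      = (2 * u' * (-(‖x‖ ^ 2))) • Y x := by
    have per : ∀ j : Fin m, (2 * u' * x j) • (e j * (cvec e x * Y x))
        = (2 * u') • ((x j • e j) * (cvec e x * Y x)) := fun j => by
      rw [smul_mul_assoc, smul_smul]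
    rw [Finset.sum_congr rfl fun j _ => per j, ← Finset.smul_sum, ← Finset.sum_mul,
      ← cvec_real, ← mul_assoc, cvec_sq hA, smul_mul_assoc, one_mul, Complex.coe_smul,
      smul_smul]
  have hS3 : ∑ _j : Fin m, -(u (‖x‖ ^ 2) • Y x) = (-(m : ℝ) * u (‖x‖ ^ 2)) • Y x := by
    rw [Finset.sum_const, Finset.card_univ, Fintype.card_fin, ← Nat.cast_smul_eq_nsmul ℝ,
      smul_neg, smul_smul]
    rw [← neg_smul]
    ring_nf
  rw [hS1, hS2, hS3]
  module



lemma exists_ne_zero {Y : Em m → A} (hm : 2 ≤ m) (hY0 : Y ≠ 0) (hYsm : ContDiff ℝ (⊤ : ℕ∞) Y) (k : ℕ)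
    (hYhom : ∀ t : ℝ, 0 < t → ∀ x : Em m, Y (t • x) = (t ^ k) • Y x) :
    ∃ z : Em m, z ≠ 0 ∧ Y z ≠ 0 := by
  obtain ⟨z, hz⟩ := Function.ne_iff.mp hY0
  simp only [Pi.zero_apply] at hz
  by_cases hz0 : z = 0
  · subst hz0
    rcases Nat.eq_zero_or_pos k with hk | hk
    · subst hk
      have hmpos : 0 < m := by omega
      refine ⟨EuclideanSpace.single (⟨0, hmpos⟩ : Fin m) 1, ?_, ?_⟩
      · intro h
        have := congrArg (fun v : Em m => v ⟨0, hmpos⟩) h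
        simp [EuclideanSpace.single_apply] at this
      · set w : Em m := EuclideanSpace.single (⟨0, hmpos⟩ : Fin m) 1
        have key : Y w = Y 0 := by
          have hc : Filter.Tendsto (fun s : ℝ => Y (s • w)) (nhdsWithin 0 (Set.Ioi 0))
              (nhds (Y 0)) := by
            have h1 : Filter.Tendsto (fun s : ℝ => s • w) (nhdsWithin 0 (Set.Ioi 0))
                (nhds (0 : Em m)) := by
              have := (continuous_id.smul continuous_const
                  : Continuous fun s : ℝ => s • w).tendsto 0
              exact (Continuous.tendsto' (f := fun s : ℝ => s • w)
                (continuous_id.smul continuous_const) 0 0 (by simp)).mono_left nhdsWithin_le_nhds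
            exact (hYsm.continuous.tendsto 0).comp h1
          have hc' : Filter.Tendsto (fun _ : ℝ => Y w) (nhdsWithin 0 (Set.Ioi 0))
              (nhds (Y 0)) := by
            refine hc.congr' ?_
            filter_upwards [self_mem_nhdsWithin] with s hs
            have := hYhom s hs w
            simpa using this
          exact (tendsto_nhds_unique tendsto_const_nhds hc')
        rw [key]; exact hz
    · exfalso
      have h2 := hYhom 2 (by norm_num) 0
      rw [smul_zero] at h2
      have hzero : Y 0 = 0 := by
        have hsub : ((1 : ℝ) - 2 ^ k) • Y 0 = 0 := by
          rw [sub_smul, one_smul, ← h2, sub_self]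
        have hne : (1 : ℝ) - 2 ^ k ≠ 0 := by
          have : (2:ℝ)^k ≥ 2^1 := by
            apply pow_le_pow_right₀ (by norm_num) hk
          norm_num at this ⊢
          nlinarith
        have := congrArg (fun v => ((1 : ℝ) - 2 ^ k)⁻¹ • v) hsub
        simpa [smul_smul, inv_mul_cancel₀ hne] using this
      exact hz hzero
  · exact ⟨z, hz0, hz⟩



end Aux

/-- The radial part `G` of an odd eigenfunction `x G(|x|²)Y_k(x)` of `L_c`
with eigenvalue `χ` satisfies
`4t(1-t)G'' + 2(m+2k+2-t(4+m+2k))G' - (4π²c²t + 2(m+2k))G + χG = 0` on `(0,1)`. -/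
theorem radial_ODE_odd {m : ℕ} (hm : 2 ≤ m) {A : Type*} [NormedRing A]
    [NormedAlgebra ℂ A] (e : Fin m → A) (b : Module.Basis (Finset (Fin m)) ℂ A)
    (hA : IsCliffordAlgebra m A e b) (k : ℕ) {c : ℝ} (hc : 0 ≤ c) (χ : ℝ)
    (Y : Em m → A) (hY0 : Y ≠ 0)
    (hYsm : ContDiff ℝ (⊤ : ℕ∞) Y)
    (hYhom : ∀ t : ℝ, 0 < t → ∀ x, Y (t • x) = (t ^ k) • Y x)
    (hYmono : ∀ x, dirac e Y x = 0)
    (G : ℝ → ℝ) (hG : ContDiffOn ℝ 2 G (Set.Icc 0 1))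
    (heig : ∀ x ∈ Metric.ball (0 : Em m) 1,
      Lc e c (fun y => cvec e y * (G (‖y‖ ^ 2) • Y y)) x =
        χ • (cvec e x * (G (‖x‖ ^ 2) • Y x))) :
    ∀ t ∈ Set.Ioo (0 : ℝ) 1,
      4 * t * (1 - t) * deriv (deriv G) t +
          2 * ((m : ℝ) + 2 * k + 2 - t * (4 + m + 2 * k)) * deriv G t -
          (4 * π ^ 2 * c ^ 2 * t + 2 * ((m : ℝ) + 2 * k)) * G t + χ * G t = 0 := by
  intro t ht
  obtain ⟨ht0, ht1⟩ := ht
  -- smoothness of G on the open interval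
  have hGI : ContDiffOn ℝ 2 G (Set.Ioo 0 1) := hG.mono Set.Ioo_subset_Icc_self
  have hdGI : ContDiffOn ℝ 1 (deriv G) (Set.Ioo 0 1) :=
    hGI.deriv_of_isOpen isOpen_Ioo (by norm_num)
  have hGd : ∀ s ∈ Set.Ioo (0:ℝ) 1, HasDerivAt G (deriv G s) s := fun s hs =>
    (((hGI.differentiableOn (by norm_num)) s hs).differentiableAt
      (isOpen_Ioo.mem_nhds hs)).hasDerivAt
  have hGd2 : HasDerivAt (deriv G) (deriv (deriv G) t) t :=
    (((hdGI.differentiableOn (by norm_num)) t ⟨ht0, ht1⟩).differentiableAt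
      (isOpen_Ioo.mem_nhds ⟨ht0, ht1⟩)).hasDerivAt
  -- choose a good point x
  obtain ⟨z, hz0, hzY⟩ := exists_ne_zero hm hY0 hYsm k hYhom
  have hznorm : (0:ℝ) < ‖z‖ := norm_pos_iff.mpr hz0
  set r : ℝ := Real.sqrt t / ‖z‖ with hr_def
  have hr : 0 < r := div_pos (Real.sqrt_pos.mpr ht0) hznorm
  set x : Em m := r • z with hx_def
  have hxnorm : ‖x‖ = Real.sqrt t := by
    rw [hx_def, norm_smul, Real.norm_eq_abs, abs_of_pos hr, hr_def,
      div_mul_cancel₀ _ (ne_of_gt hznorm)]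
  have hxsq : ‖x‖ ^ 2 = t := by rw [hxnorm, Real.sq_sqrt ht0.le]
  have hYx : Y x ≠ 0 := by
    rw [hx_def, hYhom r hr z]
    intro h
    apply hzY
    have := congrArg (fun v => (r ^ k)⁻¹ • v) h
    simpa [smul_smul, inv_mul_cancel₀ (pow_ne_zero k hr.ne')] using this
  have hxball : x ∈ Metric.ball (0 : Em m) 1 := by
    rw [mem_ball_zero_iff, hxnorm]
    rw [show (1:ℝ) = Real.sqrt 1 by simp]
    exact Real.sqrt_lt_sqrt ht0.le ht1
  -- cvec x * Y x ≠ 0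
  have hcY : cvec e x * Y x ≠ 0 := by
    intro h
    apply hYx
    have h2 : cvec e x * (cvec e x * Y x) = 0 := by rw [h, mul_zero]
    rw [← mul_assoc, cvec_sq hA, smul_mul_assoc, one_mul, Complex.coe_smul, hxsq] at h2
    rcases smul_eq_zero.mp h2 with h | h
    · exact absurd h (by intro hh; linarith [neg_eq_zero.mp hh])
    · exact h
  -- the radial factor for the inner Dirac derivative
  set M : ℝ := (m : ℝ) + 2 * k with hM_def
  set w : ℝ → ℝ := fun s => (1 - s) * (-M * G s - 2 * s * deriv G s) with hw_def
  have hYdiff : ∀ y : Em m, DifferentiableAt ℝ Y y := fun y =>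
    (hYsm.differentiable (by simp)) y
  -- inner equation on the open annulus
  set U : Set (Em m) := (fun y : Em m => ‖y‖ ^ 2) ⁻¹' (Set.Ioo 0 1) with hU_def
  have hUopen : IsOpen U :=
    (continuous_norm.pow 2).isOpen_preimage _ isOpen_Ioo
  have hxU : x ∈ U := by
    simp only [hU_def, Set.mem_preimage, hxsq]
    exact ⟨ht0, ht1⟩
  have hinner : ∀ y ∈ U,
      (1 - ‖y‖ ^ 2) • dirac e (fun y' => cvec e y' * (G (‖y'‖ ^ 2) • Y y')) y
        = w (‖y‖ ^ 2) • Y y := by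
    intro y hy
    have hy' : ‖y‖ ^ 2 ∈ Set.Ioo (0:ℝ) 1 := hy
    rw [dirac_odd hA k hYhom y (hGd _ hy') (hYdiff y) (hYmono y), smul_smul, hw_def]
  -- replace the outer dirac argument
  have hcong : (fun y => (1 - ‖y‖ ^ 2) •
        dirac e (fun y' => cvec e y' * (G (‖y'‖ ^ 2) • Y y')) y)
      =ᶠ[nhds x] fun y => w (‖y‖ ^ 2) • Y y := by
    filter_upwards [hUopen.mem_nhds hxU] with y hy
    exact hinner y hy
  -- derivative of w at t
  set g1 : ℝ := deriv G t with hg1_def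
  set g2 : ℝ := deriv (deriv G) t with hg2_def
  set W' : ℝ := (0 - 1) * (-M * G t - 2 * t * g1) + (1 - t) * (-M * g1 - (2 * g1 + 2 * t * g2))
    with hW_def
  have hw' : HasDerivAt w W' t := by
    have hinner' : HasDerivAt (fun s => -M * G s - 2 * s * deriv G s)
        (-M * g1 - (2 * g1 + 2 * t * g2)) t := by
      have h1 : HasDerivAt (fun s : ℝ => -M * G s) (-M * g1) t :=
        (hGd t ⟨ht0, ht1⟩).const_mul (-M)
      have h2 : HasDerivAt (fun s : ℝ => 2 * s * deriv G s) (2 * g1 + 2 * t * g2) t := by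
        have h0 := (((hasDerivAt_id t).const_mul 2).mul hGd2)
        simp only [id_eq] at h0
        refine h0.congr_deriv ?_
        ring
      exact h1.sub h2
    have houter : HasDerivAt (fun s : ℝ => 1 - s) (0 - 1) t :=
      (hasDerivAt_const t 1).sub (hasDerivAt_id t)
    exact houter.mul hinner'
  have hw't : HasDerivAt w W' (‖x‖ ^ 2) := by rw [hxsq]; exact hw'
  -- assemble the eigenvalue equation at x
  have hLc := heig x hxball
  rw [Lc] at hLc
  rw [dirac_congr hcong] at hLc
  rw [dirac_radial_smul hw't (hYdiff x), hYmono x, smul_zero, add_zero] at hLc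
  rw [hxsq] at hLc
  -- ψ x = G t • (cvec x * Y x)
  rw [mul_smul_comm (G t) (cvec e x) (Y x)] at hLc
  have hkey : (2 * W' + 4 * π ^ 2 * c ^ 2 * t * G t - χ * G t) • (cvec e x * Y x) = 0 := by
    have : (2 * W') • (cvec e x * Y x)
        + (4 * π ^ 2 * c ^ 2 * t) • (G t • (cvec e x * Y x))
        - χ • (G t • (cvec e x * Y x)) = 0 := by
      rw [hLc]; abel
    rw [smul_smul, smul_smul] at this
    rw [sub_smul, add_smul]
    convert this using 2
  have hS : 2 * W' + 4 * π ^ 2 * c ^ 2 * t * G t - χ * G t = 0 := by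
    by_contra hS
    apply hcY
    have := congrArg (fun v => (2 * W' + 4 * π ^ 2 * c ^ 2 * t * G t - χ * G t)⁻¹ • v) hkey
    simpa [smul_smul, inv_mul_cancel₀ hS] using this
  rw [hW_def, hM_def] at hS
  rw [hM_def]
  linear_combination -hS
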